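/- arXiv:1912.00516 — 4 statements merged into one kernel-verified Lean document; each statement's English description precedes it below -/
import Mathlib

section
/- Let G be a graph with no star cutset and let (X1, X2, A1, A2, B1, B2) be a split of a minimally-sided 2-join of G with minimal side X1. Then |A1| ≥ 2 and |B1| ≥ 2, and every vertex of A2 ∪ B2 has degree at least 3 in G. -/
open SimpleGraph

universe u

variable {V : Type u}

/-- A hole: a chordless cycle of length at least 4. -/
def IsHole (G : SimpleGraph V) {v : V} (c : G.Walk v v) : Prop :=
  c.IsCycle ∧ 4 ≤ c.length ∧
    ∀ x ∈ c.support, ∀ y ∈ c.support, G.Adj x y → s(x, y) ∈ c.edges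

/-- There is a hole of `G` passing through both `u` and `v`. -/
def HasHoleThrough (G : SimpleGraph V) (u v : V) : Prop :=
  ∃ (w : V) (c : G.Walk w w), IsHole G c ∧ u ∈ c.support ∧ v ∈ c.support

/-- `G` contains a theta as an induced subgraph: three internally vertex-disjoint
paths of length at least 2 between two distinct vertices, with no further edges
among the vertices of the three paths. -/
def ContainsTheta (G : SimpleGraph V) : Prop :=
  ∃ (a b : V) (P₁ P₂ P₃ : G.Walk a b),
    a ≠ b ∧ P₁.IsPath ∧ P₂.IsPath ∧ P₃.IsPath ∧
    2 ≤ P₁.length ∧ 2 ≤ P₂.length ∧ 2 ≤ P₃.length ∧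
    (∀ x ∈ P₁.support, x ∈ P₂.support → x = a ∨ x = b) ∧
    (∀ x ∈ P₁.support, x ∈ P₃.support → x = a ∨ x = b) ∧
    (∀ x ∈ P₂.support, x ∈ P₃.support → x = a ∨ x = b) ∧
    (∀ x y : V, (x ∈ P₁.support ∨ x ∈ P₂.support ∨ x ∈ P₃.support) →
      (y ∈ P₁.support ∨ y ∈ P₂.support ∨ y ∈ P₃.support) → G.Adj x y →
      s(x, y) ∈ P₁.edges ∨ s(x, y) ∈ P₂.edges ∨ s(x, y) ∈ P₃.edges)

/-- `G` contains a wheel as an induced subgraph: a hole together with a vertex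
having at least 3 neighbors on the hole. -/
def ContainsWheel (G : SimpleGraph V) : Prop :=
  ∃ (w : V) (c : G.Walk w w) (x y₁ y₂ y₃ : V),
    IsHole G c ∧ x ∉ c.support ∧
    y₁ ∈ c.support ∧ y₂ ∈ c.support ∧ y₃ ∈ c.support ∧
    y₁ ≠ y₂ ∧ y₁ ≠ y₃ ∧ y₂ ≠ y₃ ∧ G.Adj x y₁ ∧ G.Adj x y₂ ∧ G.Adj x y₃

/-- `G` contains a diamond (K₄ minus an edge) as an induced subgraph. -/
def ContainsDiamond (G : SimpleGraph V) : Prop :=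
  ∃ a b c d : V, a ≠ b ∧ a ≠ c ∧ a ≠ d ∧ b ≠ c ∧ b ≠ d ∧ c ≠ d ∧
    ¬ G.Adj a b ∧ G.Adj a c ∧ G.Adj a d ∧ G.Adj b c ∧ G.Adj b d ∧ G.Adj c d

/-- `G` contains a claw (K_{1,3}) as an induced subgraph. -/
def ContainsClaw (G : SimpleGraph V) : Prop :=
  ∃ u v₁ v₂ v₃ : V, v₁ ≠ v₂ ∧ v₁ ≠ v₃ ∧ v₂ ≠ v₃ ∧
    G.Adj u v₁ ∧ G.Adj u v₂ ∧ G.Adj u v₃ ∧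
    ¬ G.Adj v₁ v₂ ∧ ¬ G.Adj v₁ v₃ ∧ ¬ G.Adj v₂ v₃

/-- `(A, K, B)` is a split witnessing that `K` is a cutset of `G`:
`A` and `B` are nonempty, the three sets partition the vertex set,
and there are no edges between `A` and `B`. -/
def IsCutsetSplit (G : SimpleGraph V) (A K B : Set V) : Prop :=
  A.Nonempty ∧ B.Nonempty ∧ Disjoint A K ∧ Disjoint A B ∧ Disjoint K B ∧
    A ∪ K ∪ B = Set.univ ∧ ∀ a ∈ A, ∀ b ∈ B, ¬ G.Adj a b

/-- `G` has a clique cutset. -/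
def HasCliqueCutset (G : SimpleGraph V) : Prop :=
  ∃ K A B : Set V, G.IsClique K ∧ IsCutsetSplit G A K B

/-- Some clique cutset of `G` separates `u` and `v`. -/
def CliqueCutsetSeparates (G : SimpleGraph V) (u v : V) : Prop :=
  ∃ K A B : Set V, G.IsClique K ∧ IsCutsetSplit G A K B ∧ u ∈ A ∧ v ∈ B

/-- `G` has a star cutset: a nonempty cutset containing a vertex adjacent to
all other vertices of the cutset. -/
def HasStarCutset (G : SimpleGraph V) : Prop :=
  ∃ S A B : Set V, S.Nonempty ∧ IsCutsetSplit G A S B ∧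
    ∃ x ∈ S, ∀ y ∈ S, y ≠ x → G.Adj x y

/-- `u` and `v` are joined by a walk all of whose vertices lie in `X`. -/
def ReachableWithin (G : SimpleGraph V) (X : Set V) (u v : V) : Prop :=
  ∃ p : G.Walk u v, ∀ x ∈ p.support, x ∈ X

/-- `C` is a connected component of the subgraph of `G` induced by `X`. -/
def IsCompOf (G : SimpleGraph V) (X C : Set V) : Prop :=
  C.Nonempty ∧ C ⊆ X ∧ (∀ u ∈ C, ∀ v ∈ C, ReachableWithin G X u v) ∧
    ∀ u ∈ C, ∀ v ∈ X, G.Adj u v → v ∈ C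

/-- The subgraph of `G` induced by `A` is a disjoint union of cliques. -/
def UnionOfCliques (G : SimpleGraph V) (A : Set V) : Prop :=
  ∀ x ∈ A, ∀ y ∈ A, ∀ z ∈ A, G.Adj x y → G.Adj y z → x ≠ z → G.Adj x z

/-- `(X₁, X₂, A₁, A₂, B₁, B₂)` is a split of an almost 2-join of `G`. -/
def AlmostTwoJoinSplit (G : SimpleGraph V) (X₁ X₂ A₁ A₂ B₁ B₂ : Set V) : Prop :=
  Disjoint X₁ X₂ ∧ X₁ ∪ X₂ = Set.univ ∧ 3 ≤ X₁.ncard ∧ 3 ≤ X₂.ncard ∧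
  A₁.Nonempty ∧ B₁.Nonempty ∧ A₂.Nonempty ∧ B₂.Nonempty ∧
  A₁ ⊆ X₁ ∧ B₁ ⊆ X₁ ∧ A₂ ⊆ X₂ ∧ B₂ ⊆ X₂ ∧
  Disjoint A₁ B₁ ∧ Disjoint A₂ B₂ ∧
  (∀ a ∈ A₁, ∀ b ∈ A₂, G.Adj a b) ∧
  (∀ a ∈ B₁, ∀ b ∈ B₂, G.Adj a b) ∧
  (∀ x ∈ X₁, ∀ y ∈ X₂, G.Adj x y → (x ∈ A₁ ∧ y ∈ A₂) ∨ (x ∈ B₁ ∧ y ∈ B₂))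

/-- The subgraph of `G` induced by `X` is a chordless path. -/
def InducesPath (G : SimpleGraph V) (X : Set V) : Prop :=
  ∃ (u v : V) (p : G.Walk u v), p.IsPath ∧ (∀ x : V, x ∈ p.support ↔ x ∈ X) ∧
    ∀ x ∈ X, ∀ y ∈ X, G.Adj x y → s(x, y) ∈ p.edges

/-- `(X₁, X₂, A₁, A₂, B₁, B₂)` is a split of a 2-join of `G`. -/
def TwoJoinSplit (G : SimpleGraph V) (X₁ X₂ A₁ A₂ B₁ B₂ : Set V) : Prop :=
  AlmostTwoJoinSplit G X₁ X₂ A₁ A₂ B₁ B₂ ∧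
  (∃ a ∈ A₁, ∃ b ∈ B₁, ReachableWithin G X₁ a b) ∧
  (∃ a ∈ A₂, ∃ b ∈ B₂, ReachableWithin G X₂ a b) ∧
  (A₁.ncard = 1 → B₁.ncard = 1 → ¬ InducesPath G X₁) ∧
  (A₂.ncard = 1 → B₂.ncard = 1 → ¬ InducesPath G X₂)

/-- `(X₁, X₂, A₁, A₂, B₁, B₂)` is a split of a minimally-sided 2-join of `G`,
with `X₁` a minimal side. -/
def MinimallySidedTwoJoin (G : SimpleGraph V) (X₁ X₂ A₁ A₂ B₁ B₂ : Set V) : Prop :=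
  TwoJoinSplit G X₁ X₂ A₁ A₂ B₁ B₂ ∧
  ∀ Y₁ Y₂ C₁ C₂ D₁ D₂ : Set V, TwoJoinSplit G Y₁ Y₂ C₁ C₂ D₁ D₂ →
    ¬ Y₁ ⊂ X₁ ∧ ¬ Y₂ ⊂ X₁

/-- Conditions (i)–(iii) and (vi)–(viii) of consistency of an almost 2-join,
for the side `X` with special sets `A` and `B`. -/
def ConsistentSide (G : SimpleGraph V) (X A B : Set V) : Prop :=
  (∀ C : Set V, IsCompOf G X C → (C ∩ A).Nonempty ∧ (C ∩ B).Nonempty) ∧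
  (∀ a ∈ A, ∃ b ∈ B, ¬ G.Adj a b) ∧
  (∀ b ∈ B, ∃ a ∈ A, ¬ G.Adj b a) ∧
  (∀ u ∈ X, ∀ v ∈ X, ReachableWithin G X u v) ∧
  (∀ v ∈ X, ∃ b ∈ B, ∃ p : G.Walk v b, p.IsPath ∧ (∀ x ∈ p.support, x ∈ X) ∧
    ∀ x ∈ p.support, x ∈ A → x = v ∨ x = b) ∧
  (∀ v ∈ X, ∃ a ∈ A, ∃ p : G.Walk v a, p.IsPath ∧ (∀ x ∈ p.support, x ∈ X) ∧
    ∀ x ∈ p.support, x ∈ B → x = v ∨ x = a)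

/-- The block of decomposition of `G` with respect to a 2-join, keeping the side `X`
(with special sets `A`, `B`) and replacing the other side by a marker path of
length `k` whose endpoint `0` is complete to `A` and endpoint `k` is complete to `B`. -/
def TwoJoinBlock (G : SimpleGraph V) (X A B : Set V) (k : ℕ) :
    SimpleGraph (↥X ⊕ Fin (k + 1)) where
  Adj x y :=
    match x, y with
    | Sum.inl a, Sum.inl b => G.Adj ↑a ↑b
    | Sum.inl a, Sum.inr i => ((a : V) ∈ A ∧ i = 0) ∨ ((a : V) ∈ B ∧ i = Fin.last k)
    | Sum.inr i, Sum.inl a => ((a : V) ∈ A ∧ i = 0) ∨ ((a : V) ∈ B ∧ i = Fin.last k)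
    | Sum.inr i, Sum.inr j => (i : ℕ) + 1 = (j : ℕ) ∨ (j : ℕ) + 1 = (i : ℕ)
  symm := by
    constructor
    rintro (a | i) (b | j) h
    · exact h.symm
    · exact h
    · exact h
    · exact Or.symm h
  loopless := by
    constructor
    rintro (a | i) h
    · exact G.irrefl h
    · rcases h with h | h <;> omega

/-- A graph is chordless if no cycle in it has a chord. -/
def ChordlessGraph (G : SimpleGraph V) : Prop :=
  ∀ (u : V) (c : G.Walk u u), c.IsCycle →
    ∀ x ∈ c.support, ∀ y ∈ c.support, G.Adj x y → s(x, y) ∈ c.edges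

/-- The subgraph of `G` induced by `S` has a clique cutset. -/
def HasCliqueCutsetOn (G : SimpleGraph V) (S : Set V) : Prop :=
  ∃ K A B : Set V, G.IsClique K ∧ A.Nonempty ∧ B.Nonempty ∧ Disjoint A K ∧
    Disjoint A B ∧ Disjoint K B ∧ A ∪ K ∪ B = S ∧ ∀ a ∈ A, ∀ b ∈ B, ¬ G.Adj a b

/-- The total weight of a set of vertices. -/
noncomputable def wsum [Fintype V] (w : V → ℕ) (A : Set V) : ℕ :=
  ∑ v ∈ A.toFinite.toFinset, w v

/-!
In a graph without star cutset an end of an induced path on one side of an almost 2-join has a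
neighbour outside its side (otherwise its neighbour on the path is a star cutset isolating it), so
it lies in a special set. Suppose `A₁ = {a}`. Then `a` has no neighbour `b ∈ B₁`, otherwise
`{a, b} ∪ B₂` is a star cutset. If `|X₁| = 3`, then `X₁` is the path `a w b` with `B₁ = {b}`,
which a 2-join excludes. If `|X₁| ≥ 4`, moving `a` to the other side gives a 2-join with the smaller
side `X₁ \ {a}`, contradicting minimality: an induced path on either new side would extend or
shrink to a path on `X₁` or `X₂` with singleton special sets. By exchanging the roles of `A` and
`B`, also `|B₁| ≥ 2`. Finally a
vertex `v ∈ A₂` has a neighbour in `X₂`: if `A₂ = {v}` the path from `A₂` to `B₂` inside `X₂`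
leaves `v` through one, and otherwise the neighbourhood of `v` would lie in the star `A₁ ∪ {a₂}`
for another `a₂ ∈ A₂`. So its degree is at least `|A₁| + 1 ≥ 3`.
-/

section

variable {G : SimpleGraph V}

theorem hasStarCutset_of_adj_mem_union {S P : Set V} {x z : V} (hx : x ∈ S)
    (hstar : ∀ y ∈ S, y ≠ x → G.Adj x y) (hP : P.Nonempty) (hPS : Disjoint P S)
    (hclosed : ∀ p ∈ P, ∀ y, G.Adj p y → y ∈ P ∪ S) (hz : z ∉ P ∪ S) : HasStarCutset G := by
  refine ⟨S, P, (P ∪ S)ᶜ, ⟨x, hx⟩, ⟨hP, ⟨z, hz⟩, hPS, ?_, ?_, ?_, ?_⟩, x, hx, hstar⟩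
  · exact Set.disjoint_compl_right_iff_subset.2 Set.subset_union_left
  · exact Set.disjoint_compl_right_iff_subset.2 Set.subset_union_right
  · exact Set.union_compl_self _
  · exact fun p hp y hy hpy => hy (hclosed p hp y hpy)

theorem hasStarCutset_of_adj_mem {S : Set V} {x v z : V} (hx : x ∈ S)
    (hstar : ∀ y ∈ S, y ≠ x → G.Adj x y) (hv : v ∉ S) (hN : ∀ y, G.Adj v y → y ∈ S)
    (hzv : z ≠ v) (hz : z ∉ S) : HasStarCutset G := by
  refine hasStarCutset_of_adj_mem_union hx hstar (Set.singleton_nonempty v)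
    (Set.disjoint_singleton_left.2 hv) ?_ (z := z) (by simp [hzv, hz])
  rintro p rfl y hy
  exact Or.inr (hN y hy)

theorem ReachableWithin.cons {X : Set V} {u v w : V} (h : ReachableWithin G X v w)
    (huv : G.Adj u v) : ReachableWithin G (insert u X) u w := by
  obtain ⟨p, hp⟩ := h
  refine ⟨Walk.cons huv p, fun x hx => ?_⟩
  rcases List.mem_cons.1 (Walk.support_cons huv p ▸ hx) with rfl | hx
  · exact Set.mem_insert x X
  · exact Set.mem_insert_of_mem u (hp x hx)

theorem ReachableWithin.reverse {X : Set V} {u v : V} (h : ReachableWithin G X u v) :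
    ReachableWithin G X v u := by
  obtain ⟨p, hp⟩ := h
  exact ⟨p.reverse, fun x hx => hp x (by simpa using hx)⟩

theorem ReachableWithin.exists_adj_sdiff {X : Set V} {u v : V} (h : ReachableWithin G X u v)
    (huv : u ≠ v) : ∃ w ∈ X, G.Adj u w ∧ ReachableWithin G (X \ {u}) w v := by
  classical
  obtain ⟨p, hp⟩ := h
  have hpath := p.bypass_isPath
  have hsub := p.support_bypass_subset_support
  generalize p.bypass = q at hpath hsub
  cases q with
  | nil => exact absurd rfl huv
  | cons hadj q =>
    rw [Walk.cons_isPath_iff] at hpath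
    refine ⟨_, hp _ (hsub (by simp)), hadj, q, fun x hx => ⟨hp x (hsub (by simp [hx])), ?_⟩⟩
    rintro rfl
    exact hpath.2 hx

namespace SimpleGraph.Walk

/-- `InducesPath G S` unfolds to `∃ u v (p : G.Walk u v), p.IsInducedPathOn S`. -/
def IsInducedPathOn {u v : V} (p : G.Walk u v) (S : Set V) : Prop :=
  p.IsPath ∧ (∀ x, x ∈ p.support ↔ x ∈ S) ∧ ∀ x ∈ S, ∀ y ∈ S, G.Adj x y → s(x, y) ∈ p.edges

namespace IsInducedPathOn

variable {S : Set V} {u v : V}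

theorem nil (u : V) : (nil : G.Walk u u).IsInducedPathOn {u} := by
  refine ⟨IsPath.nil, by simp, ?_⟩
  rintro x rfl y rfl hxy
  exact absurd hxy (G.loopless.irrefl _)

theorem reverse {p : G.Walk u v} (hp : p.IsInducedPathOn S) : p.reverse.IsInducedPathOn S :=
  ⟨hp.1.reverse, fun x => by rw [support_reverse, List.mem_reverse, hp.2.1],
    fun x hx y hy hxy => by rw [edges_reverse, List.mem_reverse]; exact hp.2.2 x hx y hy hxy⟩

theorem cons {p : G.Walk u v} (hp : p.IsInducedPathOn S) {a : V} (ha : a ∉ S)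
    (hadj : G.Adj a u) (hu : ∀ x ∈ S, G.Adj a x → x = u) :
    (Walk.cons hadj p).IsInducedPathOn (insert a S) := by
  obtain ⟨hpath, hsupp, hchord⟩ := hp
  refine ⟨hpath.cons fun h => ha ((hsupp a).1 h), fun x => by simp [hsupp x], ?_⟩
  simp only [Set.mem_insert_iff, edges_cons, List.mem_cons]
  rintro x (rfl | hx) y (rfl | hy) hxy
  · exact absurd hxy (G.loopless.irrefl _)
  · exact Or.inl (by rw [hu y hy hxy])
  · exact Or.inl (by rw [hu x hx hxy.symm, Sym2.eq_swap])
  · exact Or.inr (hchord x hx y hy hxy)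

theorem eq_of_adj_of_cons {a : V} {hadj : G.Adj a u} {p : G.Walk u v}
    (hp : (Walk.cons hadj p).IsInducedPathOn S) {x : V} (hx : x ∈ S) (hax : G.Adj a x) :
    x = u := by
  obtain ⟨hpath, hsupp, hchord⟩ := hp
  have hau : a ∉ p.support := (cons_isPath_iff hadj p).1 hpath |>.2
  have hS : a ∈ S := (hsupp a).1 (start_mem_support _)
  rcases List.mem_cons.1 (hchord a hS x hx hax) with h | h
  · rcases Sym2.eq_iff.1 h with ⟨-, rfl⟩ | ⟨rfl, rfl⟩
    · rfl
    · exact absurd hadj (G.loopless.irrefl _)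
  · exact absurd (fst_mem_support_of_mem_edges p h) hau

theorem of_cons {a : V} {hadj : G.Adj a u} {p : G.Walk u v}
    (hp : (Walk.cons hadj p).IsInducedPathOn S) : p.IsInducedPathOn (S \ {a}) := by
  obtain ⟨hpath, hsupp, hchord⟩ := hp
  have hau : a ∉ p.support := (cons_isPath_iff hadj p).1 hpath |>.2
  refine ⟨hpath.of_cons, fun x => ?_, fun x hx y hy hxy => ?_⟩
  · rw [Set.mem_sdiff, ← hsupp, support_cons, List.mem_cons, Set.mem_singleton_iff]
    constructor
    · exact fun h => ⟨Or.inr h, fun hxa => hau (hxa ▸ h)⟩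
    · rintro ⟨h | h, hxa⟩
      · exact absurd h hxa
      · exact h
  · rcases List.mem_cons.1 (hchord x hx.1 y hy.1 hxy) with h | h
    · rcases Sym2.eq_iff.1 h with ⟨rfl, -⟩ | ⟨-, rfl⟩
      · exact absurd rfl hx.2
      · exact absurd rfl hy.2
    · exact h

theorem ne_of_one_lt_ncard {p : G.Walk u v} (hp : p.IsInducedPathOn S) (hS : 1 < S.ncard) :
    u ≠ v := by
  rintro rfl
  obtain rfl : p = Walk.nil := (isPath_iff_nil.1 hp.1).eq_nil
  have hSu : S = {u} := Set.ext fun x => by simp [← hp.2.1 x]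
  simp [hSu] at hS

theorem exists_adj_notMem (hG : ¬ HasStarCutset G) {p : G.Walk u v} (hp : p.IsInducedPathOn S)
    (huv : u ≠ v) {z : V} (hz : z ∉ S) : ∃ y ∉ S, G.Adj u y := by
  cases p with
  | nil => exact absurd rfl huv
  | @cons _ w _ hadj q =>
    by_contra! hN
    have hS : ∀ x, x ∈ (Walk.cons hadj q).support → x ∈ S := fun x => (hp.2.1 x).1
    refine hG (hasStarCutset_of_adj_mem (z := z) (Set.mem_singleton w)
      (fun y hy hne => absurd hy hne) (fun h => hadj.ne (Set.mem_singleton_iff.1 h)) (fun y hy => ?_) ?_ ?_)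
    · by_cases hyS : y ∈ S
      · exact hp.eq_of_adj_of_cons hyS hy
      · exact absurd hy (hN y hyS)
    · rintro rfl; exact hz (hS _ (start_mem_support _))
    · rintro rfl; exact hz (hS _ (by simp))

end IsInducedPathOn

end SimpleGraph.Walk

variable {X₁ X₂ A₁ A₂ B₁ B₂ : Set V}

theorem AlmostTwoJoinSplit.finite (hJ : AlmostTwoJoinSplit G X₁ X₂ A₁ A₂ B₁ B₂) : Finite V := by
  obtain ⟨-, hU, h₁, h₂, -⟩ := hJ
  rw [← Set.finite_univ_iff, ← hU]
  exact (Set.finite_of_ncard_pos (by omega)).union (Set.finite_of_ncard_pos (by omega))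

theorem AlmostTwoJoinSplit.symm (hJ : AlmostTwoJoinSplit G X₁ X₂ A₁ A₂ B₁ B₂) :
    AlmostTwoJoinSplit G X₂ X₁ A₂ A₁ B₂ B₁ := by
  obtain ⟨hX, hU, h₁, h₂, hA₁, hB₁, hA₂, hB₂, hA₁X, hB₁X, hA₂X, hB₂X, hAB₁, hAB₂, hAA, hBB, hE⟩ :=
    hJ
  refine ⟨hX.symm, Set.union_comm X₁ X₂ ▸ hU, h₂, h₁, hA₂, hB₂, hA₁, hB₁, hA₂X, hB₂X, hA₁X, hB₁X,
    hAB₂, hAB₁, fun a ha b hb => (hAA b hb a ha).symm, fun a ha b hb => (hBB b hb a ha).symm,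
    fun x hx y hy hxy => ?_⟩
  rcases hE y hy x hx hxy.symm with h | h
  · exact Or.inl h.symm
  · exact Or.inr h.symm

theorem AlmostTwoJoinSplit.swap (hJ : AlmostTwoJoinSplit G X₁ X₂ A₁ A₂ B₁ B₂) :
    AlmostTwoJoinSplit G X₁ X₂ B₁ B₂ A₁ A₂ := by
  obtain ⟨hX, hU, h₁, h₂, hA₁, hB₁, hA₂, hB₂, hA₁X, hB₁X, hA₂X, hB₂X, hAB₁, hAB₂, hAA, hBB, hE⟩ :=
    hJ
  exact ⟨hX, hU, h₁, h₂, hB₁, hA₁, hB₂, hA₂, hB₁X, hA₁X, hB₂X, hA₂X, hAB₁.symm, hAB₂.symm, hBB, hAA,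
    fun x hx y hy hxy => (hE x hx y hy hxy).symm⟩

theorem TwoJoinSplit.swap (hJ : TwoJoinSplit G X₁ X₂ A₁ A₂ B₁ B₂) :
    TwoJoinSplit G X₁ X₂ B₁ B₂ A₁ A₂ := by
  obtain ⟨hJ, ⟨a₁, ha₁, b₁, hb₁, h₁⟩, ⟨a₂, ha₂, b₂, hb₂, h₂⟩, hP₁, hP₂⟩ := hJ
  exact ⟨hJ.swap, ⟨b₁, hb₁, a₁, ha₁, h₁.reverse⟩, ⟨b₂, hb₂, a₂, ha₂, h₂.reverse⟩,
    fun hB hA => hP₁ hA hB, fun hB hA => hP₂ hA hB⟩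

theorem MinimallySidedTwoJoin.swap (h : MinimallySidedTwoJoin G X₁ X₂ A₁ A₂ B₁ B₂) :
    MinimallySidedTwoJoin G X₁ X₂ B₁ B₂ A₁ A₂ :=
  ⟨h.1.swap, h.2⟩

theorem AlmostTwoJoinSplit.start_mem_of_isInducedPathOn (hG : ¬ HasStarCutset G)
    (hJ : AlmostTwoJoinSplit G X₁ X₂ A₁ A₂ B₁ B₂) {u v : V} {p : G.Walk u v}
    (hp : p.IsInducedPathOn X₁) (huv : u ≠ v) : u ∈ A₁ ∪ B₁ := by
  obtain ⟨hX, hU, -, -, -, -, ⟨a₂, ha₂⟩, -, -, -, hA₂X, -, -, -, -, -, hE⟩ := hJ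
  obtain ⟨y, hy, hadj⟩ := hp.exists_adj_notMem hG huv (hX.notMem_of_mem_right (hA₂X ha₂))
  have hyX₂ : y ∈ X₂ := (hU ▸ Set.mem_univ y : y ∈ X₁ ∪ X₂).resolve_left hy
  rcases hE u ((hp.2.1 u).1 p.start_mem_support) y hyX₂ hadj with h | h
  · exact Or.inl h.1
  · exact Or.inr h.1

/-- Both ends of the path lie in `{a, b}`, so one of them is `a`. -/
theorem AlmostTwoJoinSplit.exists_isInducedPathOn_from (hG : ¬ HasStarCutset G) {a b : V}
    (hJ : AlmostTwoJoinSplit G X₁ X₂ {a} A₂ {b} B₂) (hX : InducesPath G X₁)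
    (hX₁ : 1 < X₁.ncard) : ∃ (x : V) (q : G.Walk a x), q.IsInducedPathOn X₁ ∧ a ≠ x := by
  obtain ⟨u, v, p, hp⟩ := hX
  have hp : p.IsInducedPathOn X₁ := hp
  have huv := hp.ne_of_one_lt_ncard hX₁
  have hu := hJ.start_mem_of_isInducedPathOn hG hp huv
  have hv := hJ.start_mem_of_isInducedPathOn hG hp.reverse huv.symm
  simp only [Set.singleton_union, Set.mem_insert_iff, Set.mem_singleton_iff] at hu hv
  rcases hu with rfl | rfl
  · exact ⟨v, p, hp, huv⟩
  · obtain rfl := hv.resolve_right (Ne.symm huv)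
    exact ⟨u, p.reverse, hp.reverse, huv.symm⟩

theorem AlmostTwoJoinSplit.inducesPath_insert (hG : ¬ HasStarCutset G) {a b c : V}
    (hJ : AlmostTwoJoinSplit G X₁ X₂ {c} A₂ {b} B₂) (ha : a ∈ A₂) (hX : InducesPath G X₁)
    (hX₁ : 1 < X₁.ncard) : InducesPath G (insert a X₁) := by
  obtain ⟨x, q, hq, -⟩ := hJ.exists_isInducedPathOn_from hG hX hX₁
  obtain ⟨hX, -, -, -, -, -, -, -, -, -, hA₂X, -, -, hAB₂, hAA, -, hE⟩ := hJ
  refine ⟨a, x, _, hq.cons (hX.notMem_of_mem_right (hA₂X ha)) (hAA c rfl a ha).symm ?_⟩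
  intro y hy hay
  rcases hE y hy a (hA₂X ha) hay.symm with h | h
  · exact h.1
  · exact absurd h.2 (hAB₂.notMem_of_mem_left ha)

theorem AlmostTwoJoinSplit.exists_inducesPath_sdiff (hG : ¬ HasStarCutset G) {a b : V}
    (hJ : AlmostTwoJoinSplit G X₁ X₂ {a} A₂ {b} B₂) (hX : InducesPath G X₁)
    (hX₁ : 1 < X₁.ncard) : ∃ w, (∀ y ∈ X₁, G.Adj a y → y = w) ∧ InducesPath G (X₁ \ {a}) := by
  obtain ⟨x, q, hq, hax⟩ := hJ.exists_isInducedPathOn_from hG hX hX₁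
  cases q with
  | nil => exact absurd rfl hax
  | @cons _ w _ hadj q => exact ⟨w, fun y hy => hq.eq_of_adj_of_cons hy, w, x, q, hq.of_cons⟩

/-- The star cutset `{a, b} ∪ B₂`, centred at `b`, separates `X₁ \ {a, b}` from `X₂ \ B₂`. -/
theorem AlmostTwoJoinSplit.hasStarCutset_of_adj {a b : V}
    (hJ : AlmostTwoJoinSplit G X₁ X₂ {a} A₂ B₁ B₂) (hb : b ∈ B₁) (hab : G.Adj a b) :
    HasStarCutset G := by
  obtain ⟨hX, hU, h₁, -, -, -, ⟨a₂, ha₂⟩, -, hA₁X, hB₁X, hA₂X, hB₂X, -, hAB₂, -, hBB, hE⟩ := hJ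
  have haX : a ∈ X₁ := hA₁X rfl
  have hbX : b ∈ X₁ := hB₁X hb
  have ha₂X : a₂ ∉ X₁ := hX.notMem_of_mem_right (hA₂X ha₂)
  have hP : (X₁ \ {a, b}).Nonempty := by
    have := Set.le_ncard_sdiff {a, b} X₁
    have := Set.ncard_insert_le a {b}
    rw [Set.ncard_singleton] at this
    exact Set.nonempty_of_ncard_ne_zero (by omega)
  refine hasStarCutset_of_adj_mem_union (S := insert a (insert b B₂)) (z := a₂)
    (Set.mem_insert_of_mem a (Set.mem_insert b B₂)) ?_ hP ?_ ?_ ?_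
  · rintro y (rfl | rfl | hy) hne
    · exact hab.symm
    · exact absurd rfl hne
    · exact hBB b hb y hy
  · refine Set.disjoint_left.2 ?_
    rintro x ⟨hx, hxab⟩ (rfl | rfl | hxB)
    · exact hxab (Set.mem_insert _ _)
    · exact hxab (Set.mem_insert_of_mem _ rfl)
    · exact hX.notMem_of_mem_right (hB₂X hxB) hx
  · rintro p ⟨hp, hpab⟩ y hpy
    rcases (hU ▸ Set.mem_univ y : y ∈ X₁ ∪ X₂) with hy | hy
    · by_cases hyab : y ∈ ({a, b} : Set V)
      · exact Or.inr (Set.insert_subset_insert (Set.singleton_subset_iff.2 (Set.mem_insert b B₂))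
          hyab)
      · exact Or.inl ⟨hy, hyab⟩
    · rcases hE p hp y hy hpy with h | h
      · exact absurd (Set.singleton_subset_iff.2 (Set.mem_insert a {b}) h.1) hpab
      · exact Or.inr (Set.mem_insert_of_mem a (Set.mem_insert_of_mem b h.2))
  · rintro (⟨h, -⟩ | rfl | rfl | h)
    · exact ha₂X h
    · exact ha₂X haX
    · exact ha₂X hbX
    · exact hAB₂.notMem_of_mem_left ha₂ h

/-- Otherwise `X₁ = {a, w, b}` is the path `a w b`, or `w` is a pendant vertex. -/
theorem TwoJoinSplit.ncard_ne_three (hG : ¬ HasStarCutset G) [Finite V] {a : V}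
    (hJ : TwoJoinSplit G X₁ X₂ {a} A₂ B₁ B₂) (hab : ∀ b ∈ B₁, ¬ G.Adj a b) : X₁.ncard ≠ 3 := by
  obtain ⟨⟨-, hU, -, -, -, -, -, -, hA₁X, hB₁X, -, -, hAB₁, -, -, -, hE⟩, ⟨a', ha', b, hb, hr⟩, -,
    hP₁, -⟩ := hJ
  replace hr : ReachableWithin G X₁ a b := Set.mem_singleton_iff.1 ha' ▸ hr
  have hab' : a ≠ b := fun h => hAB₁.notMem_of_mem_left rfl (h ▸ hb)
  obtain ⟨w, hwX, haw, -⟩ := hr.exists_adj_sdiff hab'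
  have hwb : w ≠ b := fun h => hab b hb (h ▸ haw)
  intro h3
  have hX₁ : X₁ = {a, w, b} := by
    refine (Set.eq_of_subset_of_ncard_le ?_ ?_).symm
    · rintro x (rfl | rfl | rfl)
      exacts [hA₁X rfl, hwX, hB₁X hb]
    · rw [h3, Set.ncard_eq_three.2 ⟨a, w, b, haw.ne, hab', hwb, rfl⟩]
  have hB₁ : B₁ = {b} := by
    refine Set.Subset.antisymm (fun x hx => ?_) (Set.singleton_subset_iff.2 hb)
    rcases hX₁ ▸ hB₁X hx with rfl | rfl | rfl
    · exact absurd hx (hAB₁.notMem_of_mem_left rfl)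
    · exact absurd haw (hab x hx)
    · rfl
  have hwb' : G.Adj w b := by
    by_contra hwb'
    refine hG (hasStarCutset_of_adj_mem (Set.mem_singleton a) (fun y hy hne => absurd hy hne)
      haw.ne' (fun y hwy => ?_) hwb.symm hab'.symm)
    rcases (hU ▸ Set.mem_univ y : y ∈ X₁ ∪ X₂) with hy | hy
    · rcases hX₁ ▸ hy with rfl | rfl | rfl
      · rfl
      · exact absurd hwy (G.loopless.irrefl _)
      · exact absurd hwy hwb'
    · rcases hE w hwX y hy hwy with h | h
      · exact absurd h.1 haw.ne'
      · exact absurd (hB₁ ▸ h.1 : w ∈ ({b} : Set V)) hwb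
  have hpath : (Walk.cons haw (Walk.cons hwb' Walk.nil)).IsInducedPathOn X₁ := by
    rw [hX₁]
    refine ((Walk.IsInducedPathOn.nil b).cons hwb hwb' fun x hx _ => hx).cons ?_ haw ?_
    · simp [haw.ne, hab']
    · rintro x (rfl | rfl) hax
      · rfl
      · exact absurd hax (hab _ hb)
  exact hP₁ (Set.ncard_singleton a) (by rw [hB₁, Set.ncard_singleton]) ⟨a, b, _, hpath⟩

theorem AlmostTwoJoinSplit.move_vertex [Finite V] {a : V}
    (hJ : AlmostTwoJoinSplit G X₁ X₂ {a} A₂ B₁ B₂) (h4 : 4 ≤ X₁.ncard)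
    (hab : ∀ b ∈ B₁, ¬ G.Adj a b) (hC : ∃ w ∈ X₁, G.Adj a w) :
    AlmostTwoJoinSplit G (X₁ \ {a}) (insert a X₂) {x ∈ X₁ | G.Adj a x} {a} B₁ B₂ := by
  obtain ⟨hX, hU, -, h₂, -, hB₁, -, hB₂, hA₁X, hB₁X, -, hB₂X, hAB₁, -, -, hBB, hE⟩ := hJ
  have haX₁ : a ∈ X₁ := hA₁X rfl
  have haX₂ : a ∉ X₂ := hX.notMem_of_mem_left haX₁
  refine ⟨?_, ?_, ?_, ?_, hC, hB₁, Set.singleton_nonempty a, hB₂, ?_, ?_,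
    Set.singleton_subset_iff.2 (Set.mem_insert a X₂), hB₂X.trans (Set.subset_insert a X₂),
    Set.disjoint_left.2 fun x hx hxB => hab x hxB hx.2,
    Set.disjoint_singleton_left.2 fun h => haX₂ (hB₂X h),
    fun x hx y hy => Set.mem_singleton_iff.1 hy ▸ hx.2.symm, hBB, ?_⟩
  · refine Set.disjoint_left.2 ?_
    rintro x ⟨hx, hxa⟩ (rfl | hx₂)
    · exact hxa rfl
    · exact hX.notMem_of_mem_left hx hx₂
  · rw [Set.union_insert, ← Set.insert_union, Set.insert_sdiff_singleton,
      Set.insert_eq_of_mem haX₁, hU]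
  · rw [Set.ncard_sdiff_singleton_of_mem haX₁]
    omega
  · rw [Set.ncard_insert_of_notMem haX₂]
    omega
  · rintro x ⟨hx, hax⟩
    exact ⟨hx, fun h => G.loopless.irrefl a (Set.mem_singleton_iff.1 h ▸ hax)⟩
  · exact fun x hx => ⟨hB₁X hx, fun h => hAB₁.notMem_of_mem_right hx h⟩
  · rintro x ⟨hx, hxa⟩ y (rfl | hy) hxy
    · exact Or.inl ⟨⟨hx, hxy.symm⟩, rfl⟩
    · rcases hE x hx y hy hxy with h | h
      · exact absurd h.1 hxa
      · exact Or.inr h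

theorem TwoJoinSplit.move_vertex (hG : ¬ HasStarCutset G) [Finite V] {a : V}
    (hJ : TwoJoinSplit G X₁ X₂ {a} A₂ B₁ B₂) (h4 : 4 ≤ X₁.ncard)
    (hab : ∀ b ∈ B₁, ¬ G.Adj a b) :
    TwoJoinSplit G (X₁ \ {a}) (insert a X₂) {x ∈ X₁ | G.Adj a x} {a} B₁ B₂ := by
  obtain ⟨hJ, ⟨a', ha', b, hb, hr₁⟩, ⟨a₂, ha₂, b₂, hb₂, hr₂⟩, hP₁, hP₂⟩ := hJ
  have ⟨hX, _, _, _, _, _, hA₂, _, hA₁X, _, hA₂X, _, hAB₁, _, hAA, _, _⟩ := hJ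
  replace hr₁ : ReachableWithin G X₁ a b := Set.mem_singleton_iff.1 ha' ▸ hr₁
  have haX₁ : a ∈ X₁ := hA₁X rfl
  have haX₂ : a ∉ X₂ := hX.notMem_of_mem_left haX₁
  have hab' : a ≠ b := fun h => hAB₁.notMem_of_mem_left rfl (h ▸ hb)
  obtain ⟨w, hwX, haw, hr⟩ := hr₁.exists_adj_sdiff hab'
  have hJ' := hJ.move_vertex h4 hab ⟨w, hwX, haw⟩
  have ⟨_, _, hY₁, hY₂, _⟩ := hJ'
  refine ⟨hJ', ⟨w, ⟨hwX, haw⟩, b, hb, hr⟩,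
    ⟨a, rfl, b₂, hb₂, hr₂.cons (hAA a rfl a₂ ha₂)⟩, ?_, ?_⟩
  · intro hC hB hY
    obtain ⟨c, hc⟩ := Set.ncard_eq_one.1 hC
    obtain ⟨b', hb'⟩ := Set.ncard_eq_one.1 hB
    rw [hc, hb'] at hJ'
    have := hJ'.inducesPath_insert hG rfl hY (by omega)
    rw [Set.insert_sdiff_singleton, Set.insert_eq_of_mem haX₁] at this
    exact hP₁ (Set.ncard_singleton a) hB this
  · intro _ hB hY
    obtain ⟨b', hb'⟩ := Set.ncard_eq_one.1 hB
    rw [hb'] at hJ'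
    obtain ⟨w, hw, hX₂⟩ := hJ'.symm.exists_inducesPath_sdiff hG hY (by omega)
    rw [Set.insert_sdiff_self_of_notMem haX₂] at hX₂
    have hA₂w : A₂ = {w} := hA₂.subset_singleton_iff.1 fun y hy =>
      hw y (Set.mem_insert_of_mem a (hA₂X hy)) (hAA a rfl y hy)
    exact hP₂ (by rw [hA₂w, Set.ncard_singleton]) hB hX₂

theorem MinimallySidedTwoJoin.two_le_ncard_A₁ (hG : ¬ HasStarCutset G) [Finite V]
    (hmin : MinimallySidedTwoJoin G X₁ X₂ A₁ A₂ B₁ B₂) : 2 ≤ A₁.ncard := by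
  obtain ⟨hJ, hminimal⟩ := hmin
  have ⟨_, _, hX₁, _, hA₁, _, _, _, hA₁X, _⟩ := hJ.1
  by_contra! h
  obtain ⟨a, rfl⟩ : ∃ a, A₁ = {a} :=
    Set.ncard_eq_one.1 (by have := (Set.ncard_pos (Set.toFinite A₁)).2 hA₁; omega)
  have hab : ∀ b ∈ B₁, ¬ G.Adj a b := fun b hb hadj => hG (hJ.1.hasStarCutset_of_adj hb hadj)
  rcases hX₁.eq_or_lt with h3 | h4
  · exact hJ.ncard_ne_three hG hab h3.symm
  · exact (hminimal _ _ _ _ _ _ (hJ.move_vertex hG h4 hab)).1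
      (Set.sdiff_singleton_ssubset.2 (hA₁X rfl))

theorem TwoJoinSplit.exists_adj_of_mem_A₂ (hG : ¬ HasStarCutset G)
    (hJ : TwoJoinSplit G X₁ X₂ A₁ A₂ B₁ B₂) {v : V} (hv : v ∈ A₂) : ∃ x ∈ X₂, G.Adj v x := by
  obtain ⟨⟨hX, hU, -, -, -, ⟨b₁, hb₁⟩, -, -, hA₁X, hB₁X, hA₂X, -, hAB₁, hAB₂, hAA, -, hE⟩, -,
    ⟨a₂, ha₂, b₂, hb₂, hr⟩, -, -⟩ := hJ
  by_contra! hN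
  by_cases hva : a₂ = v
  · subst hva
    obtain ⟨x, hx, hvx, -⟩ := hr.exists_adj_sdiff (hAB₂.ne_of_mem ha₂ hb₂)
    exact hN x hx hvx
  · have hb₁X₂ : b₁ ∉ X₂ := hX.notMem_of_mem_left (hB₁X hb₁)
    refine hG (hasStarCutset_of_adj_mem (S := insert a₂ A₁) (z := b₁) (Set.mem_insert a₂ A₁)
      ?_ ?_ (fun y hvy => ?_) (fun h => hb₁X₂ (h ▸ hA₂X hv)) ?_)
    · rintro y (rfl | hy) hne
      · exact absurd rfl hne
      · exact (hAA y hy a₂ ha₂).symm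
    · rintro (h | h)
      · exact hva h.symm
      · exact hX.notMem_of_mem_left (hA₁X h) (hA₂X hv)
    · rcases (hU ▸ Set.mem_univ y : y ∈ X₁ ∪ X₂) with hy | hy
      · rcases hE y hy v (hA₂X hv) hvy.symm with h | h
        · exact Set.mem_insert_of_mem a₂ h.1
        · exact absurd h.2 (hAB₂.notMem_of_mem_left hv)
      · exact absurd hvy (hN y hy)
    · rintro (h | h)
      · exact hb₁X₂ (h ▸ hA₂X ha₂)
      · exact hAB₁.notMem_of_mem_left h hb₁

theorem TwoJoinSplit.three_le_ncard_neighborSet (hG : ¬ HasStarCutset G) [Finite V]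
    (hJ : TwoJoinSplit G X₁ X₂ A₁ A₂ B₁ B₂) (hA₁ : 2 ≤ A₁.ncard) {v : V} (hv : v ∈ A₂) :
    3 ≤ (G.neighborSet v).ncard := by
  obtain ⟨x, hx, hvx⟩ := hJ.exists_adj_of_mem_A₂ hG hv
  obtain ⟨⟨hX, -, -, -, -, -, -, -, hA₁X, -, -, -, -, -, hAA, -, -⟩, -⟩ := hJ
  have hxA₁ : x ∉ A₁ := fun h => hX.notMem_of_mem_left (hA₁X h) hx
  have hsub : insert x A₁ ⊆ G.neighborSet v := by
    rintro y (rfl | hy)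
    · exact hvx
    · exact (hAA y hy v hv).symm
  calc 3 ≤ A₁.ncard + 1 := by omega
    _ = (insert x A₁).ncard := (Set.ncard_insert_of_notMem hxA₁).symm
    _ ≤ (G.neighborSet v).ncard := Set.ncard_le_ncard hsub

end

theorem stmt6_general {V : Type u} (G : SimpleGraph V)
    (hStar : ¬ HasStarCutset G)
    (X₁ X₂ A₁ A₂ B₁ B₂ : Set V)
    (hmin : MinimallySidedTwoJoin G X₁ X₂ A₁ A₂ B₁ B₂) :
    2 ≤ A₁.ncard ∧ 2 ≤ B₁.ncard ∧
      ∀ v ∈ A₂ ∪ B₂, 3 ≤ (G.neighborSet v).ncard := by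
  have := hmin.1.1.finite
  have hA₁ := hmin.two_le_ncard_A₁ hStar
  have hB₁ := hmin.swap.two_le_ncard_A₁ hStar
  refine ⟨hA₁, hB₁, ?_⟩
  rintro v (hv | hv)
  · exact hmin.1.three_le_ncard_neighborSet hStar hA₁ hv
  · exact hmin.swap.1.three_le_ncard_neighborSet hStar hB₁ hv

/-- Let G be a graph with no star cutset and let (X₁, X₂, A₁, A₂, B₁, B₂) be a split
of a minimally-sided 2-join of G with minimal side X₁. Then |A₁| ≥ 2 and |B₁| ≥ 2,
and every vertex of A₂ ∪ B₂ has degree at least 3 in G. -/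
theorem stmt6 {V : Type u} [Fintype V] (G : SimpleGraph V)
    (hStar : ¬ HasStarCutset G)
    (X₁ X₂ A₁ A₂ B₁ B₂ : Set V)
    (hmin : MinimallySidedTwoJoin G X₁ X₂ A₁ A₂ B₁ B₂) :
    2 ≤ A₁.ncard ∧ 2 ≤ B₁.ncard ∧
      ∀ v ∈ A₂ ∪ B₂, 3 ≤ (G.neighborSet v).ncard :=
  stmt6_general G hStar X₁ X₂ A₁ A₂ B₁ B₂ hmin
end

section
/- Let G be a graph having a clique cutset decomposition tree of depth p ≥ 1 with splits (A_i, K_i, B_i) for 0 ≤ i ≤ p−1, and set B_p = A_{p−1}, K_p = K_{p−1}. Let X be one of the sets A_i ∪ K_i or K_i ∪ B_i for some 0 ≤ i ≤ p−1, or the set K_p ∪ B_p. Then for every connected component C of G − X, the neighborhood N_G(C) is contained in X and is a clique of G. -/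
open SimpleGraph

universe u

variable {V : Type u}

/-!
Call `S` *clique-attached* when any two distinct vertices of `S` that have neighbours in a common
component of `G - S` are adjacent; this says exactly that every component of `G - S` has a clique
neighbourhood. The whole vertex set is trivially clique-attached, and the property passes from `S`
to both sides `A ∪ K` and `K ∪ B` of a clique-cutset split `(A, K, B)` of `S`: a component of
`G - (A ∪ K)` either avoids `B`, and is then a component of `G - S`, or meets `B`, and then each of
its neighbours lies in `K`, since a neighbour in `A` would attach, together with some vertex of
`B`, to one component of `G - S`, and would therefore be adjacent to that vertex of `B`.
Induction along the decomposition tree covers every set `X` of the statement.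
-/

namespace SimpleGraph

def CliqueAttached (G : SimpleGraph V) (S : Set V) : Prop :=
  ∀ ⦃y z x x' : V⦄, y ∈ S → z ∈ S → y ≠ z → G.Adj y x → G.Adj x' z →
    ReachableWithin G Sᶜ x x' → G.Adj y z

theorem cliqueAttached_univ (G : SimpleGraph V) : CliqueAttached G Set.univ :=
  fun _ _ _ _ _ _ _ _ _ ⟨w, hw⟩ => (hw _ w.start_mem_support trivial).elim

variable {G : SimpleGraph V}

theorem Walk.exists_entry_edge {T : Set V} :
    ∀ {x x' : V} (w : G.Walk x x'), x ∉ T → (∃ b ∈ w.support, b ∈ T) →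
      ∃ u v, ReachableWithin G Tᶜ x u ∧ G.Adj u v ∧ v ∈ T ∧ v ∈ w.support
  | _, _, .nil, hx, ⟨b, hb, hbT⟩ => by
    rw [Walk.support_nil, List.mem_singleton] at hb
    exact absurd (hb ▸ hbT) hx
  | x, _, .cons (v := x₁) hxx₁ w, hx, ⟨b, hb, hbT⟩ => by
    by_cases hx₁ : x₁ ∈ T
    · exact ⟨x, x₁, ⟨.nil, by simpa using hx⟩, hxx₁, hx₁, by simp⟩
    have hbw : b ∈ w.support := by
      rcases List.mem_cons.mp hb with rfl | hb
      · exact absurd hbT hx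
      · exact hb
    obtain ⟨u, v, ⟨p, hp⟩, huv, hvT, hvw⟩ := w.exists_entry_edge hx₁ ⟨b, hbw, hbT⟩
    refine ⟨u, v, ⟨.cons hxx₁ p, ?_⟩, huv, hvT, by simp [hvw]⟩
    simpa [Walk.support_cons, hx] using hp

section Split

variable {S A K B : Set V} (hS : CliqueAttached G S) (hsplit : A ∪ K ∪ B = S)
  (hAB : ∀ a ∈ A, ∀ b ∈ B, ¬ G.Adj a b)
include hS hsplit hAB

theorem CliqueAttached.mem_cutset_of_adj_walk_meets {y x x' : V} (hy : y ∈ A ∪ K)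
    (hyx : G.Adj y x) (w : G.Walk x x') (hw : ∀ v ∈ w.support, v ∉ A ∪ K)
    (hwS : ∃ b ∈ w.support, b ∈ S) : y ∈ K := by
  have mem_B : ∀ v ∈ w.support, v ∈ S → v ∈ B := fun v hv hvS => by
    rw [← hsplit] at hvS
    exact hvS.resolve_left (hw v hv)
  refine hy.resolve_left fun hyA => ?_
  by_cases hxS : x ∈ S
  · exact hAB y hyA x (mem_B x w.start_mem_support hxS) hyx
  obtain ⟨u, v, hxu, huv, hvS, hvw⟩ := w.exists_entry_edge hxS hwS
  have hyS : y ∈ S := hsplit ▸ Or.inl hy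
  exact hAB y hyA v (mem_B v hvw hvS)
    (hS hyS hvS (fun h => hw v hvw (h ▸ hy)) hyx huv hxu)

theorem CliqueAttached.union_left (hK : G.IsClique K) : CliqueAttached G (A ∪ K) := by
  intro y z x x' hy hz hyz hyx hx'z ⟨w, hw⟩
  have hAKS : A ∪ K ⊆ S := hsplit ▸ Set.subset_union_left
  by_cases hwS : ∃ b ∈ w.support, b ∈ S
  · have hyK := hS.mem_cutset_of_adj_walk_meets hsplit hAB hy hyx w hw hwS
    have hzK := hS.mem_cutset_of_adj_walk_meets hsplit hAB hz hx'z.symm w.reverse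
      (by simpa using hw) (by simpa using hwS)
    exact hK hyK hzK hyz
  push Not at hwS
  exact hS (hAKS hy) (hAKS hz) hyz hyx hx'z ⟨w, hwS⟩

end Split

theorem CliqueAttached.union_right {S A K B : Set V} (hS : CliqueAttached G S)
    (hsplit : A ∪ K ∪ B = S) (hAB : ∀ a ∈ A, ∀ b ∈ B, ¬ G.Adj a b) (hK : G.IsClique K) :
    CliqueAttached G (K ∪ B) := by
  rw [Set.union_comm]
  refine hS.union_left (A := B) (B := A) ?_ (fun b hb a ha h => hAB a ha b hb h.symm) hK
  rw [← hsplit]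
  ext
  simp only [Set.mem_union]
  tauto

theorem CliqueAttached.isClique_neighborhood {S C : Set V} (hS : CliqueAttached G S)
    (hC : IsCompOf G Sᶜ C) :
    {y : V | y ∉ C ∧ ∃ x ∈ C, G.Adj x y} ⊆ S ∧
      G.IsClique {y : V | y ∉ C ∧ ∃ x ∈ C, G.Adj x y} := by
  obtain ⟨-, -, hCconn, hCclosed⟩ := hC
  have hNS : {y : V | y ∉ C ∧ ∃ x ∈ C, G.Adj x y} ⊆ S := fun y ⟨hyC, x, hxC, hxy⟩ =>
    not_not.mp fun hyS => hyC (hCclosed x hxC y hyS hxy)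
  refine ⟨hNS, fun y hy z hz hyz => ?_⟩
  obtain ⟨-, x, hxC, hxy⟩ := id hy
  obtain ⟨-, x', hx'C, hx'z⟩ := id hz
  exact hS (hNS hy) (hNS hz) hyz hxy.symm hx'z (hCconn x hxC x' hx'C)

end SimpleGraph

theorem stmt8_general {V : Type u} (G : SimpleGraph V)
    (p : ℕ) (hp : 1 ≤ p) (A K B Vs : ℕ → Set V)
    (hV0 : Vs 0 = Set.univ)
    (hVsucc : ∀ i < p, Vs (i + 1) = A i ∪ K i)
    (hsplit : ∀ i < p, (A i).Nonempty ∧ (B i).Nonempty ∧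
      Disjoint (A i) (K i) ∧ Disjoint (A i) (B i) ∧ Disjoint (K i) (B i) ∧
      A i ∪ K i ∪ B i = Vs i ∧ G.IsClique (K i) ∧
      ∀ a ∈ A i, ∀ b ∈ B i, ¬ G.Adj a b)
    (X : Set V)
    (hX : (∃ i < p, X = A i ∪ K i ∨ X = K i ∪ B i) ∨ X = K (p - 1) ∪ A (p - 1))
    (C : Set V) (hC : IsCompOf G Xᶜ C) :
    {y : V | y ∉ C ∧ ∃ x ∈ C, G.Adj x y} ⊆ X ∧
      G.IsClique {y : V | y ∉ C ∧ ∃ x ∈ C, G.Adj x y} := by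
  have hlevel : ∀ i ≤ p, CliqueAttached G (Vs i) := by
    intro i
    induction i with
    | zero => exact fun _ => hV0 ▸ cliqueAttached_univ G
    | succ n ih =>
      intro hn
      obtain ⟨-, -, -, -, -, hunion, hK, hAB⟩ := hsplit n hn
      exact hVsucc n hn ▸ (ih (Nat.le_of_succ_le hn)).union_left hunion hAB hK
  refine CliqueAttached.isClique_neighborhood ?_ hC
  rcases hX with ⟨i, hi, rfl | rfl⟩ | rfl
  · exact hVsucc i hi ▸ hlevel (i + 1) hi
  · obtain ⟨-, -, -, -, -, hunion, hK, hAB⟩ := hsplit i hi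
    exact (hlevel i hi.le).union_right hunion hAB hK
  · have hlast : p - 1 + 1 = p := Nat.sub_add_cancel hp
    rw [Set.union_comm, ← hVsucc (p - 1) (by omega), hlast]
    exact hlevel p le_rfl

/-- Let G be a graph having a clique cutset decomposition tree of depth p ≥ 1 with
splits (Aᵢ, Kᵢ, Bᵢ) for 0 ≤ i ≤ p−1, and set B_p = A_{p−1}, K_p = K_{p−1}. Let X be
one of the sets Aᵢ ∪ Kᵢ or Kᵢ ∪ Bᵢ for some 0 ≤ i ≤ p−1, or the set K_p ∪ B_p. Then
for every connected component C of G − X, the neighborhood N_G(C) is contained in X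
and is a clique of G. -/
theorem stmt8 {V : Type u} [Fintype V] (G : SimpleGraph V)
    (p : ℕ) (hp : 1 ≤ p) (A K B Vs : ℕ → Set V)
    (hV0 : Vs 0 = Set.univ)
    (hVsucc : ∀ i < p, Vs (i + 1) = A i ∪ K i)
    (hsplit : ∀ i < p, (A i).Nonempty ∧ (B i).Nonempty ∧
      Disjoint (A i) (K i) ∧ Disjoint (A i) (B i) ∧ Disjoint (K i) (B i) ∧
      A i ∪ K i ∪ B i = Vs i ∧ G.IsClique (K i) ∧
      ∀ a ∈ A i, ∀ b ∈ B i, ¬ G.Adj a b)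
    (hleaf : ∀ i < p, ¬ HasCliqueCutsetOn G (K i ∪ B i))
    (hlast : ¬ HasCliqueCutsetOn G (Vs p))
    (X : Set V)
    (hX : (∃ i < p, X = A i ∪ K i ∨ X = K i ∪ B i) ∨ X = K (p - 1) ∪ A (p - 1))
    (C : Set V) (hC : IsCompOf G Xᶜ C) :
    {y : V | y ∉ C ∧ ∃ x ∈ C, G.Adj x y} ⊆ X ∧
      G.IsClique {y : V | y ∉ C ∧ ∃ x ∈ C, G.Adj x y} :=
  stmt8_general G p hp A K B Vs hV0 hVsucc hsplit X hX C hC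
end

section
/- Let R be a triangle-free graph and let F be a nonempty finite set of edges of R. Then the subgraph of the line graph L(R) induced by F is a chordless path if and only if F is the edge set of a path in R. -/
open SimpleGraph

universe u

variable {V : Type u}

/-!
The edges of a path of `R`, in order, form a path of `L(R)`: consecutive edges share the vertex
between them, and an edge of a path meets no edge of it other than its two neighbours, so this
path of `L(R)` is chordless. Conversely, a chordless path `e₁, …, eₘ` of `L(R)` is unfolded into a
path of `R` starting from an end of `e₁` that lies in no other `eᵢ`; chordlessness forces each
`eᵢ₊₁` to continue from the far end of `eᵢ`, and never to return to an earlier vertex.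
-/

namespace SimpleGraph

variable {G : SimpleGraph V}

theorem exists_adj_eq_of_mem_edgeSet {e : Sym2 V} (he : e ∈ G.edgeSet)
    {x : V} (hx : x ∈ e) : ∃ y, G.Adj x y ∧ e = s(x, y) :=
  ⟨_, by rwa [← Sym2.other_spec hx] at he, (Sym2.other_spec hx).symm⟩

namespace Walk

theorem isChordless_cons_iff {u v w : V} {h : G.Adj u v} {p : G.Walk v w}
    (hu : u ∉ p.support) :
    (cons h p).IsChordless ↔ p.IsChordless ∧ ∀ y ∈ p.support, G.Adj u y → y = v := by
  simp only [isChordless_iff_forall_mem_edges, support_cons, edges_cons, List.mem_cons]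
  constructor
  · intro hc
    refine ⟨fun x y hx hy hxy => ?_, fun y hy huy => ?_⟩
    · refine (hc (.inr hx) (.inr hy) hxy).resolve_left fun he => ?_
      rcases Sym2.eq_iff.mp he with ⟨rfl, -⟩ | ⟨-, rfl⟩ <;> contradiction
    · rcases hc (.inl rfl) (.inr hy) huy with he | he
      · exact Sym2.congr_right.mp he
      · exact (hu (p.fst_mem_support_of_mem_edges he)).elim
  · rintro ⟨hc, hv⟩ x y (rfl | hx) (rfl | hy) hxy
    · exact (G.loopless.irrefl _ hxy).elim
    · exact .inl (by rw [hv y hy hxy])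
    · exact .inl (by rw [hv x hx hxy.symm, Sym2.eq_swap])
    · exact .inr (hc hx hy hxy)

theorem exists_lineGraph_walk_of_isPath_cons {w x y : V} (h : G.Adj w x) (q : G.Walk x y)
    (hq : (cons h q).IsPath) :
    ∃ (b : G.edgeSet) (p : G.lineGraph.Walk ⟨s(w, x), h⟩ b),
      p.IsPath ∧ p.IsChordless ∧ p.support.map Subtype.val = (cons h q).edges := by
  induction q generalizing w with
  | nil => exact ⟨_, nil, .nil, by simp [isChordless_iff_forall_mem_edges], by simp⟩
  | @cons x x' y h' q ih =>
    obtain ⟨b, p, hp, hpc, hpq⟩ := ih h' hq.of_cons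
    have hw : w ∉ (cons h' q).support := ((cons_isPath_iff _ _).mp hq).2
    have hw_edges : ∀ g ∈ p.support, w ∉ (g : Sym2 V) := fun g hg hwg =>
      hw <| (cons h' q).mem_support_iff_exists_mem_edges_of_not_nil not_nil_cons |>.mpr
        ⟨g, hpq ▸ List.mem_map_of_mem hg, hwg⟩
    have hadj : G.lineGraph.Adj ⟨s(w, x), h⟩ ⟨s(x, x'), h'⟩ :=
      lineGraph_adj_iff_exists.mpr ⟨fun he => hw_edges _ p.start_mem_support (he ▸ by simp),
        x, by simp, by simp⟩
    have hstart : ⟨s(w, x), h⟩ ∉ p.support := fun hs => hw_edges _ hs (by simp)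
    refine ⟨b, cons hadj p, hp.cons hstart, (isChordless_cons_iff hstart).mpr ⟨hpc, ?_⟩,
      by simp [hpq]⟩
    intro g hg hwg
    obtain ⟨-, v, hv, hvg⟩ := lineGraph_adj_iff_exists.mp hwg
    rcases Sym2.mem_iff.mp hv with rfl | rfl
    · exact (hw_edges g hg hvg).elim
    · obtain ⟨z, -, hgz⟩ := exists_adj_eq_of_mem_edgeSet g.2 hvg
      have hz : z = x' := by
        simpa using hq.of_cons.eq_snd_of_mem_edges (hgz ▸ hpq ▸ List.mem_map_of_mem hg)
      exact Subtype.ext (by rw [hgz, hz])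

theorem IsPath.exists_lineGraph_isPath_isChordless {x y : V} {q : G.Walk x y} (hq : q.IsPath)
    (hnil : ¬q.Nil) :
    ∃ (a b : G.edgeSet) (p : G.lineGraph.Walk a b),
      p.IsPath ∧ p.IsChordless ∧ p.support.map Subtype.val = q.edges := by
  cases q with
  | nil => exact (hnil nil_nil).elim
  | cons h q => exact ⟨_, exists_lineGraph_walk_of_isPath_cons h q hq⟩

theorem eq_of_mem_of_isChordless_lineGraph_cons {a a' b : G.edgeSet} {hadj : G.lineGraph.Adj a a'}
    {p : G.lineGraph.Walk a' b} (hp : (cons hadj p).IsPath) (hc : (cons hadj p).IsChordless)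
    {g : G.edgeSet} (hg : g ∈ p.support) {v : V} (hva : v ∈ (a : Sym2 V))
    (hvg : v ∈ (g : Sym2 V)) : g = a' :=
  have ha : a ∉ p.support := ((cons_isPath_iff _ _).mp hp).2
  ((isChordless_cons_iff ha).mp hc).2 g hg
    (lineGraph_adj_iff_exists.mpr ⟨fun h => ha (h ▸ hg), v, hva, hvg⟩)

theorem IsPath.exists_mem_start_of_isChordless_lineGraph {a b : G.edgeSet}
    {p : G.lineGraph.Walk a b} (hp : p.IsPath) (hc : p.IsChordless) :
    ∃ x ∈ (a : Sym2 V), ∀ g ∈ p.support, x ∈ (g : Sym2 V) → g = a := by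
  cases p with
  | nil => exact ⟨_, Sym2.out_fst_mem _, by simp⟩
  | cons hadj p =>
    obtain ⟨hne, v, hva, hva'⟩ := lineGraph_adj_iff_exists.mp hadj
    obtain ⟨x, hvx, ha⟩ := exists_adj_eq_of_mem_edgeSet a.2 hva
    have hxa : x ∈ (a : Sym2 V) := ha ▸ Sym2.mem_mk_right _ _
    refine ⟨x, hxa, fun g hg hxg => ?_⟩
    rcases List.mem_cons.mp (support_cons _ _ ▸ hg) with rfl | hg
    · rfl
    obtain rfl := eq_of_mem_of_isChordless_lineGraph_cons hp hc hg hxa hxg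
    exact (hne (Subtype.ext (Sym2.eq_of_ne_mem hvx.ne hva hxa hva' hxg))).elim

theorem exists_isPath_from_edges_eq_of_isChordless_lineGraph {a b : G.edgeSet}
    (p : G.lineGraph.Walk a b) (hp : p.IsPath) (hc : p.IsChordless) {x : V}
    (hxa : x ∈ (a : Sym2 V)) (hx : ∀ g ∈ p.support, x ∈ (g : Sym2 V) → g = a) :
    ∃ (y : V) (q : G.Walk x y), q.IsPath ∧ q.edges = p.support.map Subtype.val := by
  induction p generalizing x with
  | nil =>
    obtain ⟨x', hxx', ha⟩ := exists_adj_eq_of_mem_edgeSet (Subtype.property _) hxa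
    exact ⟨x', hxx'.toWalk, hxx'.isPath_toWalk, by simp [ha]⟩
  | @cons a a' b hadj p ih =>
    obtain ⟨x', hxx', ha⟩ := exists_adj_eq_of_mem_edgeSet a.2 hxa
    obtain ⟨hne, v, hva, hva'⟩ := lineGraph_adj_iff_exists.mp hadj
    have ha_notMem : a ∉ p.support := ((cons_isPath_iff _ _).mp hp).2
    have hx'a' : x' ∈ (a' : Sym2 V) := by
      rcases Sym2.mem_iff.mp (ha ▸ hva) with rfl | rfl
      · exact (hne (hx a' (by simp) hva').symm).elim
      · exact hva'
    obtain ⟨y, q, hq, hqe⟩ := ih hp.of_cons ((isChordless_cons_iff ha_notMem).mp hc).1 hx'a'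
      fun g hg hx'g => eq_of_mem_of_isChordless_lineGraph_cons hp hc hg
        (ha ▸ Sym2.mem_mk_right _ _) hx'g
    have hxq : x ∉ q.support := by
      have hq_not_nil : ¬q.Nil := by
        rw [← edges_eq_nil, hqe, List.map_eq_nil_iff]
        exact p.support_ne_nil
      rw [mem_support_iff_exists_mem_edges_of_not_nil hq_not_nil, hqe]
      rintro ⟨_, he, hxe⟩
      obtain ⟨g, hg, rfl⟩ := List.mem_map.mp he
      exact ha_notMem (hx g (by simp [hg]) hxe ▸ hg)
    exact ⟨y, cons hxx' q, hq.cons hxq, by simp [hqe, ha]⟩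

theorem IsPath.exists_isPath_edges_eq_of_isChordless_lineGraph {a b : G.edgeSet}
    {p : G.lineGraph.Walk a b} (hp : p.IsPath) (hc : p.IsChordless) :
    ∃ (x y : V) (q : G.Walk x y), q.IsPath ∧ q.edges = p.support.map Subtype.val :=
  have ⟨x, hxa, hx⟩ := hp.exists_mem_start_of_isChordless_lineGraph hc
  ⟨x, exists_isPath_from_edges_eq_of_isChordless_lineGraph p hp hc hxa hx⟩

end Walk

end SimpleGraph

theorem stmt14_general {V : Type u} (R : SimpleGraph V)
    (F : Set R.edgeSet) (hF : F.Nonempty) :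
    InducesPath R.lineGraph F ↔
      ∃ (x y : V) (q : R.Walk x y), q.IsPath ∧
        ∀ e : R.edgeSet, (e : Sym2 V) ∈ q.edges ↔ e ∈ F := by
  constructor
  · rintro ⟨a, b, p, hp, hpF, hpc⟩
    obtain ⟨x, y, q, hq, hqp⟩ := hp.exists_isPath_edges_eq_of_isChordless_lineGraph
      (Walk.isChordless_iff_forall_mem_edges.mpr fun g h hg hh =>
        hpc g ((hpF g).mp hg) h ((hpF h).mp hh))
    exact ⟨x, y, q, hq, fun e => by
      rw [hqp, List.mem_map_of_injective Subtype.val_injective, hpF]⟩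
  · rintro ⟨x, y, q, hq, hqF⟩
    obtain ⟨e, he⟩ := hF
    have hnil : ¬q.Nil := fun h => by simpa [Walk.edges_eq_nil.mpr h] using (hqF e).mpr he
    obtain ⟨a, b, p, hp, hpc, hpq⟩ := hq.exists_lineGraph_isPath_isChordless hnil
    have hpF : ∀ g, g ∈ p.support ↔ g ∈ F := fun g => by
      rw [← hqF, ← hpq, List.mem_map_of_injective Subtype.val_injective]
    exact ⟨a, b, p, hp, hpF, fun g hg h hh hgh =>
      hpc.mem_edges ((hpF g).mpr hg) ((hpF h).mpr hh) hgh⟩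

/-- Let R be a triangle-free graph and let F be a nonempty finite set of edges of R.
Then the subgraph of the line graph L(R) induced by F is a chordless path if and only
if F is the edge set of a path in R. -/
theorem stmt14 {V : Type u} [Fintype V] (R : SimpleGraph V)
    (hTF : R.CliqueFree 3) (F : Set R.edgeSet) (hF : F.Nonempty) :
    InducesPath R.lineGraph F ↔
      ∃ (x y : V) (q : R.Walk x y), q.IsPath ∧
        ∀ e : R.edgeSet, (e : Sym2 V) ∈ q.edges ↔ e ∈ F :=
  stmt14_general R F hF
end

section
/- Let R be a triangle-free chordless graph and let e = x1x2 and f = y1y2 be edges of R with {x1, x2} ∩ {y1, y2} = ∅. Then either R contains a hole passing through both edges e and f, or there exists a vertex z of R such that every path in R from {x1, x2} to {y1, y2} contains z. -/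
open SimpleGraph

universe u

variable {V : Type u}

/-!
If no vertex meets every path from `{x₁, x₂}` to `{y₁, y₂}`, Menger's theorem for two paths gives
two vertex-disjoint such paths; together with `e` and `f` they close up to a cycle of length at
least 4, which is a hole because `R` is chordless.

Menger's theorem for two paths goes by induction on the number of edges. Delete the first edge
`uv` of some `X`–`Y` walk, so `u ∈ X`. If afterwards a vertex `s` separates `X` from `Y`, then no
vertex separates `Y` from `{s, v}` in `G - uv`, and induction gives disjoint paths from `Y` to `s`
and to `v`. Extend them by a path from `X` to `s` avoiding `u` and by the edge `uv`: the two walks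
stay disjoint, since no vertex other than `s` is reachable in `G - uv` both from `X` and from `Y`
without passing through `s`.
-/

namespace SimpleGraph

variable {G : SimpleGraph V} {X Y : Set V} {a b s t u v w x : V}

def Separates (G : SimpleGraph V) (z : V) (X Y : Set V) : Prop :=
  ∀ a ∈ X, ∀ b ∈ Y, ∀ p : G.Walk a b, z ∈ p.support

def reachAvoiding (G : SimpleGraph V) (t : V) (X : Set V) : Set V :=
  {w | ∃ a ∈ X, ∃ p : G.Walk a w, t ∉ p.support}

def HasTwoDisjointPaths (G : SimpleGraph V) (X Y : Set V) : Prop :=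
  ∃ a ∈ X, ∃ b ∈ Y, ∃ a' ∈ X, ∃ b' ∈ Y, ∃ (p : G.Walk a b) (q : G.Walk a' b'),
    p.IsPath ∧ q.IsPath ∧ p.support.Disjoint q.support

lemma not_separates_iff :
    ¬ G.Separates t X Y ↔ ∃ a ∈ X, ∃ b ∈ Y, ∃ p : G.Walk a b, t ∉ p.support := by
  simp [Separates]

lemma Separates.symm (h : G.Separates t X Y) : G.Separates t Y X :=
  fun b hb a ha p => by simpa using h a ha b hb p.reverse

lemma mem_reachAvoiding_of_mem (ha : a ∈ X) (hat : a ≠ t) : a ∈ G.reachAvoiding t X :=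
  ⟨a, ha, .nil, by simpa using hat.symm⟩

lemma mem_reachAvoiding_of_mem_support (ha : a ∈ X) (p : G.Walk a w) (hp : t ∉ p.support)
    (hx : x ∈ p.support) : x ∈ G.reachAvoiding t X := by
  classical
  exact ⟨a, ha, p.takeUntil x hx, fun h => hp (p.support_takeUntil_subset_support hx h)⟩

lemma mem_reachAvoiding_of_isPath (ha : a ∈ X) {p : G.Walk a t} (hp : p.IsPath)
    (hx : x ∈ p.support) (hxt : x ≠ t) : x ∈ G.reachAvoiding t X := by
  classical
  exact ⟨a, ha, p.takeUntil x hx, p.endpoint_notMem_support_takeUntil hp hx hxt.symm⟩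

lemma mem_reachAvoiding_of_adj (hw : w ∈ G.reachAvoiding t X) (h : G.Adj w x) (hxt : x ≠ t) :
    x ∈ G.reachAvoiding t X := by
  obtain ⟨a, ha, p, hp⟩ := hw
  exact ⟨a, ha, p.concat h, by simp [Walk.support_concat, hp, hxt.symm]⟩

lemma notMem_reachAvoiding_self : t ∉ G.reachAvoiding t X :=
  fun ⟨_, _, p, hp⟩ => hp p.end_mem_support

lemma Separates.notMem_reachAvoiding (hs : G.Separates t X Y) (hw : w ∈ Y) :
    w ∉ G.reachAvoiding t X :=
  fun ⟨a, ha, p, hp⟩ => hp (hs a ha w hw p)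

lemma Separates.mem_reachAvoiding (hs : G.Separates s X Y) (hw : w ∈ G.reachAvoiding t X)
    (hw' : w ∈ G.reachAvoiding s Y) : s ∈ G.reachAvoiding t X := by
  obtain ⟨a, ha, p, hp⟩ := hw
  obtain ⟨b, hb, q, hq⟩ := hw'
  have hs' := hs a ha b hb (p.append q.reverse)
  rw [Walk.mem_support_append_iff, Walk.support_reverse, List.mem_reverse] at hs'
  exact mem_reachAvoiding_of_mem_support ha p hp (hs'.resolve_right hq)

lemma Separates.disjoint_reachAvoiding (hs : G.Separates s X Y) :
    Disjoint (G.reachAvoiding s X) (G.reachAvoiding s Y) :=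
  Set.disjoint_left.2 fun _ hX hY => notMem_reachAvoiding_self (hs.mem_reachAvoiding hX hY)

lemma HasTwoDisjointPaths.of_walks {a' b' : V} (ha : a ∈ X) (hb : b ∈ Y) (ha' : a' ∈ X)
    (hb' : b' ∈ Y) (p : G.Walk a b) (q : G.Walk a' b') (h : p.support.Disjoint q.support) :
    G.HasTwoDisjointPaths X Y := by
  classical
  exact ⟨a, ha, b, hb, a', ha', b', hb', p.toPath, q.toPath, p.toPath.2, q.toPath.2,
    fun _ hp hq => h (p.support_toPath_subset_support hp) (q.support_toPath_subset_support hq)⟩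

lemma HasTwoDisjointPaths.mono {H : SimpleGraph V} (hGH : G ≤ H)
    (h : G.HasTwoDisjointPaths X Y) : H.HasTwoDisjointPaths X Y := by
  obtain ⟨a, ha, b, hb, a', ha', b', hb', p, q, -, -, hpq⟩ := h
  exact .of_walks ha hb ha' hb' (p.mapLe hGH) (q.mapLe hGH)
    (by simpa [Walk.support_mapLe_eq_support] using hpq)

lemma HasTwoDisjointPaths.exists_paths_to_pair {c d : V} (h : G.HasTwoDisjointPaths X {c, d}) :
    ∃ a ∈ X, ∃ a' ∈ X, ∃ (p : G.Walk a c) (q : G.Walk a' d),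
      p.IsPath ∧ q.IsPath ∧ p.support.Disjoint q.support := by
  obtain ⟨a, ha, b, hb, a', ha', b', hb', p, q, hp, hq, hpq⟩ := h
  have hbb : b ≠ b' := fun h => hpq p.end_mem_support (h ▸ q.end_mem_support)
  simp only [Set.mem_insert_iff, Set.mem_singleton_iff] at hb hb'
  rcases hb with rfl | rfl <;> rcases hb' with rfl | rfl
  · exact absurd rfl hbb
  · exact ⟨a, ha, a', ha', p, q, hp, hq, hpq⟩
  · exact ⟨a', ha', a, ha, q, p, hq, hp, hpq.symm⟩
  · exact absurd rfl hbb

lemma hasTwoDisjointPaths_of_mem_inter (h : ¬ G.Separates a X Y) (haX : a ∈ X) (haY : a ∈ Y) :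
    G.HasTwoDisjointPaths X Y := by
  obtain ⟨a', ha', b', hb', p, hp⟩ := not_separates_iff.1 h
  exact .of_walks haX haY ha' hb' .nil p (by simpa using hp)

lemma exists_walk_deleteEdges_of_not_separates (h : ¬ G.Separates u X Y) (v : V) :
    ∃ a ∈ X, ∃ b ∈ Y, ∃ p : (G.deleteEdges {s(u, v)}).Walk a b, u ∉ p.support := by
  obtain ⟨a, ha, b, hb, p, hp⟩ := not_separates_iff.1 h
  exact ⟨a, ha, b, hb, p.toDeleteEdge _ fun he => hp (p.fst_mem_support_of_mem_edges he),
    by simpa using hp⟩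

lemma Separates.ne_of_deleteEdges (hs : (G.deleteEdges {s(u, v)}).Separates s X Y)
    (hG : ¬ G.Separates u X Y) : s ≠ u := by
  obtain ⟨a, ha, b, hb, p, hp⟩ := exists_walk_deleteEdges_of_not_separates hG v
  exact fun h => hp (h ▸ hs a ha b hb p)

lemma ncard_edgeSet_deleteEdges_lt [Finite V] (h : G.Adj u v) :
    (G.deleteEdges {s(u, v)}).edgeSet.ncard < G.edgeSet.ncard := by
  rw [edgeSet_deleteEdges]
  exact Set.ncard_sdiff_singleton_lt_of_mem (G.mem_edgeSet.2 h)

/- Walking from `Y` to `X` without meeting `t`, one stays reachable from `Y` in `G - uv` avoiding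
`t` until the walk crosses `uv`; crossing it from `v` gives `v`, while crossing it from `u` or
arriving in `X` forces `s` to be reachable as well. -/
lemma Separates.mem_reachAvoiding_or_of_walk (hs : (G.deleteEdges {s(u, v)}).Separates s Y X)
    (hu : u ∈ (G.deleteEdges {s(u, v)}).reachAvoiding s X) (P : G.Walk a b) (ht : t ∉ P.support)
    (ha : a ∈ (G.deleteEdges {s(u, v)}).reachAvoiding t Y) (hb : b ∈ X) :
    s ∈ (G.deleteEdges {s(u, v)}).reachAvoiding t Y ∨
      v ∈ (G.deleteEdges {s(u, v)}).reachAvoiding t Y := by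
  induction P with
  | @nil a =>
    left
    by_cases has : a = s
    · exact has ▸ ha
    · exact hs.mem_reachAvoiding ha (mem_reachAvoiding_of_mem hb has)
  | @cons a a' b hadj P ih =>
    by_cases he : s(a, a') = s(u, v)
    · rcases Sym2.eq_iff.1 he with ⟨rfl, rfl⟩ | ⟨rfl, rfl⟩
      · exact .inl (hs.mem_reachAvoiding ha hu)
      · exact .inr ha
    · have ht' : t ∉ P.support := fun h => ht (by simp [h])
      exact ih ht' (mem_reachAvoiding_of_adj ha (by simp [hadj, he])
        (fun h => ht' (h ▸ P.start_mem_support))) hb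

lemma Separates.not_separates_deleteEdges (hs : (G.deleteEdges {s(u, v)}).Separates s X Y)
    (hG : ∀ z, ¬ G.Separates z X Y) (hu : u ∈ X) (t : V) :
    ¬ (G.deleteEdges {s(u, v)}).Separates t Y {s, v} := by
  intro ht
  have hu' : u ∈ (G.deleteEdges {s(u, v)}).reachAvoiding s X :=
    mem_reachAvoiding_of_mem hu (hs.ne_of_deleteEdges (hG u)).symm
  obtain ⟨a, ha, b, hb, P, hP⟩ := not_separates_iff.1 (hG t)
  have hbt : b ≠ t := fun h => hP (h ▸ P.end_mem_support)
  rcases hs.symm.mem_reachAvoiding_or_of_walk hu' P.reverse (by simpa using hP)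
    (mem_reachAvoiding_of_mem hb hbt) ha with h | h
  all_goals exact ht.notMem_reachAvoiding (by simp) h

lemma Separates.hasTwoDisjointPaths_of_deleteEdges
    (hs : (G.deleteEdges {s(u, v)}).Separates s X Y) (hG : ¬ G.Separates u X Y) (hu : u ∈ X)
    (huv : G.Adj u v) (hY : (G.deleteEdges {s(u, v)}).HasTwoDisjointPaths Y {s, v}) :
    G.HasTwoDisjointPaths X Y := by
  classical
  have hle := G.deleteEdges_le {s(u, v)}
  obtain ⟨a, ha, b, hb, W, huW⟩ := exists_walk_deleteEdges_of_not_separates hG v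
  have hsW := hs a ha b hb W
  let P := (W.takeUntil s hsW).toPath
  have huP : u ∉ P.1.support := fun h =>
    huW (W.support_takeUntil_subset_support hsW (Walk.support_toPath_subset_support _ h))
  have hsu : s ≠ u := fun h => huW (h ▸ hsW)
  obtain ⟨b₁, hb₁, b₂, hb₂, Q₁, Q₂, hQ₁, -, hQ⟩ := hY.exists_paths_to_pair
  have hsQ₂ : s ∉ Q₂.support := fun h => hQ Q₁.end_mem_support h
  have hdisj := Set.disjoint_left.1 hs.disjoint_reachAvoiding
  refine .of_walks ha hb₁ hu hb₂ ((P.1.append Q₁.reverse).mapLe hle)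
    (.cons huv (Q₂.reverse.mapLe hle)) fun x hx₁ hx₂ => ?_
  simp only [Walk.support_mapLe_eq_support, Walk.mem_support_append_iff, Walk.support_cons,
    Walk.support_reverse, List.mem_reverse, List.mem_cons] at hx₁ hx₂
  rcases hx₁ with hxP | hxQ₁ <;> rcases hx₂ with rfl | hxQ₂
  · exact huP hxP
  · have hxs : x ≠ s := fun h => hsQ₂ (h ▸ hxQ₂)
    exact hdisj (mem_reachAvoiding_of_isPath ha P.2 hxP hxs)
      (mem_reachAvoiding_of_mem_support hb₂ Q₂ hsQ₂ hxQ₂)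
  · exact hdisj (mem_reachAvoiding_of_mem hu hsu.symm)
      (mem_reachAvoiding_of_isPath hb₁ hQ₁ hxQ₁ hsu.symm)
  · exact hQ hxQ₁ hxQ₂

theorem hasTwoDisjointPaths_of_forall_not_separates [Finite V] [Nonempty V]
    {G : SimpleGraph V} {X Y : Set V} (h : ∀ z, ¬ G.Separates z X Y) :
    G.HasTwoDisjointPaths X Y := by
  obtain ⟨u, hu, b, hb, P, -⟩ := not_separates_iff.1 (h (Classical.arbitrary V))
  cases P with
  | nil => exact hasTwoDisjointPaths_of_mem_inter (h u) hu hb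
  | @cons _ v _ huv _ =>
    by_cases hs : ∃ s, (G.deleteEdges {s(u, v)}).Separates s X Y
    · obtain ⟨s, hs⟩ := hs
      exact hs.hasTwoDisjointPaths_of_deleteEdges (h u) hu huv
        (hasTwoDisjointPaths_of_forall_not_separates (hs.not_separates_deleteEdges h hu))
    · exact (hasTwoDisjointPaths_of_forall_not_separates (not_exists.1 hs)).mono
        (G.deleteEdges_le _)
termination_by G.edgeSet.ncard
decreasing_by all_goals exact ncard_edgeSet_deleteEdges_lt huv

lemma exists_isHole_of_disjoint_paths (hCh : ChordlessGraph G) {a' b' : V} (ha : G.Adj a a')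
    (hb : G.Adj b b') {p : G.Walk a b} {q : G.Walk a' b'} (hp : p.IsPath) (hq : q.IsPath)
    (hpq : p.support.Disjoint q.support) (hab : a ≠ b) (hab' : a' ≠ b') :
    ∃ (w : V) (c : G.Walk w w), IsHole G c ∧ s(a, a') ∈ c.edges ∧ s(b, b') ∈ c.edges := by
  have hp₁ : p.length ≠ 0 := fun h => hab (p.eq_of_length_eq_zero h)
  have hq₁ : q.length ≠ 0 := fun h => hab' (q.eq_of_length_eq_zero h)
  have hc : ((Walk.cons ha.symm p).append (.cons hb q.reverse)).IsCycle := by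
    refine Walk.IsPath.isCycle_append ?_ ?_ ?_ (.inl ?_)
    · exact hp.cons fun h => hpq h q.start_mem_support
    · exact hq.reverse.cons (by simpa using fun h => hpq p.end_mem_support h)
    · simpa using hpq
    · simpa using Nat.pos_of_ne_zero hp₁
  refine ⟨a', _, ⟨hc, ?_, hCh _ _ hc⟩, ?_, ?_⟩
  · simp only [Walk.length_append, Walk.length_cons, Walk.length_reverse]
    omega
  · simp [Sym2.eq_swap]
  · simp

end SimpleGraph

theorem stmt15_general {V : Type u} [Fintype V] (R : SimpleGraph V)
    (hCh : ChordlessGraph R)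
    (x₁ x₂ y₁ y₂ : V) (he : R.Adj x₁ x₂) (hf : R.Adj y₁ y₂)
    (h₁ : x₁ ≠ y₁) (h₂ : x₁ ≠ y₂) (h₃ : x₂ ≠ y₁) (h₄ : x₂ ≠ y₂) :
    (∃ (w : V) (c : R.Walk w w), IsHole R c ∧
        s(x₁, x₂) ∈ c.edges ∧ s(y₁, y₂) ∈ c.edges) ∨
    (∃ z : V, ∀ a ∈ ({x₁, x₂} : Set V), ∀ b ∈ ({y₁, y₂} : Set V),
        ∀ q : R.Walk a b, q.IsPath → z ∈ q.support) := by
  refine or_iff_not_imp_right.2 fun hsep => ?_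
  have hXY : ∀ z, ¬ R.Separates z {x₁, x₂} {y₁, y₂} := fun z hz =>
    hsep ⟨z, fun a ha b hb q _ => hz a ha b hb q⟩
  have : Nonempty V := ⟨x₁⟩
  obtain ⟨a, ha, b, hb, a', ha', b', hb', p, q, hp, hq, hpq⟩ :=
    hasTwoDisjointPaths_of_forall_not_separates hXY
  have haa : a ≠ a' := fun h => hpq p.start_mem_support (h ▸ q.start_mem_support)
  have hbb : b ≠ b' := fun h => hpq p.end_mem_support (h ▸ q.end_mem_support)
  have hX : s(x₁, x₂) = s(a, a') :=
    (Sym2.mem_and_mem_iff haa).1 ⟨Sym2.mem_iff.2 ha, Sym2.mem_iff.2 ha'⟩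
  have hY : s(y₁, y₂) = s(b, b') :=
    (Sym2.mem_and_mem_iff hbb).1 ⟨Sym2.mem_iff.2 hb, Sym2.mem_iff.2 hb'⟩
  have hdisj : Disjoint ({x₁, x₂} : Set V) {y₁, y₂} := by
    simp [h₁.symm, h₂.symm, h₃.symm, h₄.symm]
  rw [hX, hY]
  exact exists_isHole_of_disjoint_paths hCh (R.mem_edgeSet.1 (hX ▸ he))
    (R.mem_edgeSet.1 (hY ▸ hf)) hp hq hpq (Set.disjoint_left.1 hdisj ha ∘ (· ▸ hb))
    (Set.disjoint_left.1 hdisj ha' ∘ (· ▸ hb'))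

/-- Let R be a triangle-free chordless graph and let e = x₁x₂ and f = y₁y₂ be edges
of R with {x₁, x₂} ∩ {y₁, y₂} = ∅. Then either R contains a hole passing through both
edges e and f, or there exists a vertex z of R such that every path in R from
{x₁, x₂} to {y₁, y₂} contains z. -/
theorem stmt15 {V : Type u} [Fintype V] (R : SimpleGraph V)
    (hTF : R.CliqueFree 3) (hCh : ChordlessGraph R)
    (x₁ x₂ y₁ y₂ : V) (he : R.Adj x₁ x₂) (hf : R.Adj y₁ y₂)
    (h₁ : x₁ ≠ y₁) (h₂ : x₁ ≠ y₂) (h₃ : x₂ ≠ y₁) (h₄ : x₂ ≠ y₂) :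
    (∃ (w : V) (c : R.Walk w w), IsHole R c ∧
        s(x₁, x₂) ∈ c.edges ∧ s(y₁, y₂) ∈ c.edges) ∨
    (∃ z : V, ∀ a ∈ ({x₁, x₂} : Set V), ∀ b ∈ ({y₁, y₂} : Set V),
        ∀ q : R.Walk a b, q.IsPath → z ∈ q.support) :=
  stmt15_general R hCh x₁ x₂ y₁ y₂ he hf h₁ h₂ h₃ h₄
end
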